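/- arXiv:1604.03287 — 3 statements merged into one kernel-verified Lean document; each statement's English description precedes it below -/
import Mathlib

section
/- Let F : 𝒳 ⥤ 𝒞 and U : 𝒞 ⥤ 𝒳 be functors with an adjunction F ⊣ U (unit η, counit ε), where 𝒞 has pullbacks, and let 𝒫 be the class of morphisms f of 𝒞 such that U(f) is a split epimorphism in 𝒳. Then: (i) 𝒫 contains all isomorphisms of 𝒞 and is closed under composition; (ii) 𝒫 is stable under pullback: the pullback of a morphism in 𝒫 along any morphism again lies in 𝒫; (iii) for every object A of 𝒞 the counit component ε_A : F(U(A)) → A lies in 𝒫, and F(U(A)) is 𝒫-projective, i.e. for every f : X → B in 𝒫 and every g : F(U(A)) → B there exists h : F(U(A)) → X with f ∘ h = g. In particular 𝒞 has enough 𝒫-projective objects. -/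
open CategoryTheory Limits

/-- given an adjunction `F ⊣ U` with `𝒞` having pullbacks, and `𝒫` the class
of morphisms of `𝒞` sent by `U` to split epimorphisms, then: `𝒫` contains all isomorphisms
and is closed under composition; `𝒫` is stable under pullback; each counit component
`ε_A : F(U(A)) ⟶ A` lies in `𝒫` and `F(U(A))` is `𝒫`-projective.  In particular `𝒞`
has enough `𝒫`-projective objects. -/
theorem adjunction_split_epi_class_projectives
    {𝒳 : Type*} {𝒞 : Type*} [Category 𝒳] [Category 𝒞] [HasPullbacks 𝒞]
    (F : 𝒳 ⥤ 𝒞) (U : 𝒞 ⥤ 𝒳) (adj : F ⊣ U) :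
    -- (i) 𝒫 contains all isomorphisms and is closed under composition
    (∀ {X Y : 𝒞} (f : X ⟶ Y), IsIso f → IsSplitEpi (U.map f)) ∧
    (∀ {X Y Z : 𝒞} (f : X ⟶ Y) (g : Y ⟶ Z),
      IsSplitEpi (U.map f) → IsSplitEpi (U.map g) → IsSplitEpi (U.map (f ≫ g))) ∧
    -- (ii) 𝒫 is stable under pullback
    (∀ {X Y Z : 𝒞} (f : X ⟶ Z) (g : Y ⟶ Z), IsSplitEpi (U.map g) →
      IsSplitEpi (U.map (pullback.fst f g))) ∧
    -- (iii) counit components are in 𝒫 and their domains are 𝒫-projective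
    (∀ A : 𝒞, IsSplitEpi (U.map (adj.counit.app A))) ∧
    (∀ (A : 𝒞) {X B : 𝒞} (f : X ⟶ B), IsSplitEpi (U.map f) →
      ∀ g : F.obj (U.obj A) ⟶ B, ∃ h : F.obj (U.obj A) ⟶ X, h ≫ f = g) ∧
    -- in particular, 𝒞 has enough 𝒫-projective objects
    (∀ A : 𝒞, ∃ (Pr : 𝒞) (p : Pr ⟶ A), IsSplitEpi (U.map p) ∧
      ∀ {X B : 𝒞} (f : X ⟶ B), IsSplitEpi (U.map f) →
        ∀ g : Pr ⟶ B, ∃ h : Pr ⟶ X, h ≫ f = g) := by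
  haveI := adj.rightAdjoint_preservesLimits
  -- projectivity of F(U(A)), used twice
  have proj : ∀ (A : 𝒞) {X B : 𝒞} (f : X ⟶ B), IsSplitEpi (U.map f) →
      ∀ g : F.obj (U.obj A) ⟶ B, ∃ h : F.obj (U.obj A) ⟶ X, h ≫ f = g := by
    intro A X B f hf g
    refine ⟨(adj.homEquiv _ _).symm (adj.homEquiv _ _ g ≫ section_ (U.map f)), ?_⟩
    rw [← adj.homEquiv_naturality_right_symm, Category.assoc,
      IsSplitEpi.id (U.map f), Category.comp_id, Equiv.symm_apply_apply]
  have counitP : ∀ A : 𝒞, IsSplitEpi (U.map (adj.counit.app A)) := fun A =>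
    ⟨⟨⟨adj.unit.app (U.obj A), adj.right_triangle_components A⟩⟩⟩
  refine ⟨?_, ?_, ?_, counitP, proj, fun A => ⟨_, adj.counit.app A, counitP A, proj A⟩⟩
  · intro X Y f hf
    haveI : IsIso (U.map f) := inferInstance
    infer_instance
  · intro X Y Z f g hf hg
    rw [U.map_comp]
    refine ⟨⟨⟨section_ (U.map g) ≫ section_ (U.map f), ?_⟩⟩⟩
    rw [Category.assoc, ← Category.assoc (section_ (U.map f)), IsSplitEpi.id (U.map f),
      Category.id_comp, IsSplitEpi.id (U.map g)]
  · intro X Y Z f g hg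
    have hl := isLimitOfHasPullbackOfPreservesLimit U f g
    refine ⟨⟨⟨PullbackCone.IsLimit.lift hl (𝟙 _) (U.map f ≫ section_ (U.map g)) ?_, ?_⟩⟩⟩
    · rw [Category.id_comp, Category.assoc, IsSplitEpi.id (U.map g), Category.comp_id]
    · exact PullbackCone.IsLimit.lift_fst hl _ _ _
end

section
/- Let Γ'' be a composite of closed Galois structures Γ = (I, H, η, ε) : (𝒞, ℰ) → (𝒳, ℱ) and Γ' = (F, U, θ, ζ) : (𝒳, ℱ) → (𝒴, 𝒢), where 𝒞 is pointed protomodular, (𝒞, ℰ) satisfies (E4), (E5) and (M), I preserves pullbacks of type (1), and F is protoadditive. Then for f : A → B in ℰ the following are equivalent: (1) f is a Γ''-normal extension (normal with respect to the composite reflection F ∘ I of 𝒞 onto 𝒴); (2) f is a Γ-normal extension and Ker(f) lies in 𝒴. -/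
open CategoryTheory Limits

universe v u

section Axioms
variable {𝒟 : Type u} [Category.{v} 𝒟]

/-- Axiom (E1): the class contains all isomorphisms. -/
def AxE1 (E : MorphismProperty 𝒟) : Prop := ∀ {X Y : 𝒟} (f : X ⟶ Y), IsIso f → E f

/-- Axiom (E2): pullbacks of morphisms of the class exist and belong to the class. -/
def AxE2 (E : MorphismProperty 𝒟) : Prop :=
  ∀ {X Y Z : 𝒟} (f : X ⟶ Z) (g : Y ⟶ Z), E g →
    ∃ (P : 𝒟) (p₁ : P ⟶ X) (p₂ : P ⟶ Y), IsPullback p₁ p₂ f g ∧ E p₁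

/-- Axiom (E3): the class is closed under composition. -/
def AxE3 (E : MorphismProperty 𝒟) : Prop :=
  ∀ {X Y Z : 𝒟} (f : X ⟶ Y) (g : Y ⟶ Z), E f → E g → E (f ≫ g)

/-- Axiom (E4): if `f ≫ g` is in the class then so is `g`. -/
def AxE4 (E : MorphismProperty 𝒟) : Prop :=
  ∀ {X Y Z : 𝒟} (f : X ⟶ Y) (g : Y ⟶ Z), E (f ≫ g) → E g

/-- Axiom (E5): in a morphism of short exact sequences over a fixed base `A₀`, if the
extension `a` and the induced morphism `k` on kernels lie in the class, then so does the
middle morphism `f`. -/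
def AxE5 [HasZeroMorphisms 𝒟] (E : MorphismProperty 𝒟) : Prop :=
  ∀ {K L A₁ B A₀ : 𝒟} (ka : K ⟶ A₁) (kb : L ⟶ B) (a : A₁ ⟶ A₀) (b : B ⟶ A₀)
    (f : A₁ ⟶ B) (k : K ⟶ L), f ≫ b = a → k ≫ kb = ka ≫ f →
    ∀ (ha : ka ≫ a = 0) (hb : kb ≫ b = 0),
    Nonempty (IsLimit (KernelFork.ofι ka ha)) →
    Nonempty (IsLimit (KernelFork.ofι kb hb)) →
    E a → E k → E f

/-- The split short five lemma in a pointed category. -/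
def SplitShortFive (𝒟 : Type u) [Category.{v} 𝒟] [HasZeroMorphisms 𝒟] : Prop :=
  ∀ {K A B K' A' B' : 𝒟} (k : K ⟶ A) (f : A ⟶ B) (s : B ⟶ A)
    (k' : K' ⟶ A') (f' : A' ⟶ B') (s' : B' ⟶ A')
    (u : K ⟶ K') (v : A ⟶ A') (w : B ⟶ B'),
    s ≫ f = 𝟙 B → s' ≫ f' = 𝟙 B' →
    ∀ (hk : k ≫ f = 0) (hk' : k' ≫ f' = 0),
    Nonempty (IsLimit (KernelFork.ofι k hk)) →
    Nonempty (IsLimit (KernelFork.ofι k' hk')) →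
    u ≫ k' = k ≫ v → v ≫ f' = f ≫ w →
    IsIso u → IsIso w → IsIso v

/-- Pullbacks along split epimorphisms exist. -/
def HasSplitEpiPullbacks (𝒟 : Type u) [Category.{v} 𝒟] : Prop :=
  ∀ {X Y Z : 𝒟} (g : X ⟶ Z) (s : Z ⟶ X), s ≫ g = 𝟙 Z → ∀ h : Y ⟶ Z,
    ∃ (P : 𝒟) (p₁ : P ⟶ X) (p₂ : P ⟶ Y), IsPullback p₁ p₂ g h

/-- A pointed category is protomodular when it has pullbacks along split epimorphisms
and the split short five lemma holds. -/
def ProtomodularCat (𝒟 : Type u) [Category.{v} 𝒟] [HasZeroMorphisms 𝒟] : Prop :=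
  HasSplitEpiPullbacks 𝒟 ∧ SplitShortFive 𝒟

/-- An object of the `E`-slice category `(𝒟 ↓_E B)`: a morphism of `E` with codomain `B`. -/
structure ESliceObj (E : MorphismProperty 𝒟) (B : 𝒟) where
  dom : 𝒟
  hom : dom ⟶ B
  mem : E hom

/-- Morphisms of the `E`-slice category. -/
@[ext] structure ESliceHom {E : MorphismProperty 𝒟} {B : 𝒟} (g h : ESliceObj E B) where
  top : g.dom ⟶ h.dom
  w : top ≫ h.hom = g.hom

instance {E : MorphismProperty 𝒟} {B : 𝒟} : Category (ESliceObj E B) where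
  Hom := ESliceHom
  id g := ⟨𝟙 g.dom, Category.id_comp _⟩
  comp φ ψ := ⟨φ.top ≫ ψ.top, by rw [Category.assoc, ψ.w, φ.w]⟩
  id_comp φ := ESliceHom.ext (Category.id_comp φ.top)
  comp_id φ := ESliceHom.ext (Category.comp_id φ.top)
  assoc φ ψ χ := ESliceHom.ext (Category.assoc φ.top ψ.top χ.top)

/-- A functor `(𝒟 ↓_E B) ⥤ (𝒟 ↓_E A)` realizing base change (pullback) along
`f : A ⟶ B`. -/
structure PullbackFunctorAlong (E : MorphismProperty 𝒟) {A B : 𝒟} (f : A ⟶ B) where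
  R : ESliceObj E B ⥤ ESliceObj E A
  top : ∀ g : ESliceObj E B, (R.obj g).dom ⟶ g.dom
  isPB : ∀ g : ESliceObj E B, IsPullback (top g) (R.obj g).hom g.hom f
  nat : ∀ {g h : ESliceObj E B} (φ : g ⟶ h), (R.map φ).top ≫ top h = top g ≫ φ.top

/-- Axiom (M): every morphism of the class is monadic, i.e. any base-change functor
`f* : (𝒟 ↓_E B) ⥤ (𝒟 ↓_E A)` along a morphism `f` of `E` is a monadic right adjoint. -/
def AxM (E : MorphismProperty 𝒟) : Prop :=
  ∀ {A B : 𝒟} (f : A ⟶ B), E f →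
    ∀ P : PullbackFunctorAlong E f, Nonempty (MonadicRightAdjoint P.R)

/-- An object of the category `Ext_E(𝒟)` of `E`-extensions: a morphism of class `E`. -/
structure ExtObj (E : MorphismProperty 𝒟) where
  dom : 𝒟
  cod : 𝒟
  hom : dom ⟶ cod
  mem : E hom

/-- Morphisms of `Ext_E(𝒟)`: commutative squares. -/
@[ext] structure ExtHom {E : MorphismProperty 𝒟} (a b : ExtObj E) where
  top : a.dom ⟶ b.dom
  bot : a.cod ⟶ b.cod
  w : top ≫ b.hom = a.hom ≫ bot

instance {E : MorphismProperty 𝒟} : Category (ExtObj E) where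
  Hom := ExtHom
  id a := ⟨𝟙 a.dom, 𝟙 a.cod, by simp⟩
  comp φ ψ := ⟨φ.top ≫ ψ.top, φ.bot ≫ ψ.bot, by
    rw [Category.assoc, ψ.w, ← Category.assoc, φ.w, Category.assoc]⟩
  id_comp φ := ExtHom.ext (Category.id_comp φ.top) (Category.id_comp φ.bot)
  comp_id φ := ExtHom.ext (Category.comp_id φ.top) (Category.comp_id φ.bot)
  assoc φ ψ χ := ExtHom.ext (Category.assoc φ.top ψ.top χ.top)
    (Category.assoc φ.bot ψ.bot χ.bot)

instance {E : MorphismProperty 𝒟} [HasZeroMorphisms 𝒟] :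
    HasZeroMorphisms (ExtObj E) where
  zero a b := ⟨⟨0, 0, by simp⟩⟩
  comp_zero φ c := ExtHom.ext (comp_zero) (comp_zero)
  zero_comp a {b c} φ := ExtHom.ext (zero_comp) (zero_comp)

/-- A morphism of `Ext_E(𝒟)` is a double `E`-extension when its two components are in `E`
and the comparison morphism to (any) pullback is in `E`. -/
def IsDoubleExt {E : MorphismProperty 𝒟} {a b : ExtObj E} (φ : a ⟶ b) : Prop :=
  E φ.top ∧ E φ.bot ∧
  ∀ {P : 𝒟} (p₁ : P ⟶ a.cod) (p₂ : P ⟶ b.dom), IsPullback p₁ p₂ φ.bot b.hom →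
    ∀ (l : a.dom ⟶ P), l ≫ p₁ = a.hom → l ≫ p₂ = φ.top → E l

/-- The class of double `E`-extensions, as a morphism property of `Ext_E(𝒟)`. -/
def DoubleExtClass (E : MorphismProperty 𝒟) : MorphismProperty (ExtObj E) :=
  fun _ _ φ => IsDoubleExt φ


/-- A functor preserves pullbacks of type (1): pullbacks of a split epimorphism `g ∈ ℰ`
along a morphism `h ∈ ℰ`. -/
def PreservesType1 (E : MorphismProperty 𝒟) (T : 𝒟 ⥤ 𝒟) : Prop :=
  ∀ {A B D C : 𝒟} (k : A ⟶ B) (l : A ⟶ D) (g : B ⟶ C) (h : D ⟶ C) (s : C ⟶ B),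
    s ≫ g = 𝟙 C → E g → E h → IsPullback k l g h →
    IsPullback (T.map k) (T.map l) (T.map g) (T.map h)

/-- A functor between pointed categories is protoadditive when it preserves split short
exact sequences (equivalently: zero morphisms and kernels of split epimorphisms). -/
structure Protoadditive {𝒟' : Type*} [Category 𝒟'] [HasZeroMorphisms 𝒟]
    [HasZeroMorphisms 𝒟'] (T : 𝒟 ⥤ 𝒟') : Prop where
  map_zero : ∀ (X Y : 𝒟), T.map (0 : X ⟶ Y) = 0
  preserves : ∀ {K A B : 𝒟} (k : K ⟶ A) (f : A ⟶ B) (s : B ⟶ A),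
    s ≫ f = 𝟙 B → ∀ (hk : k ≫ f = 0),
    Nonempty (IsLimit (KernelFork.ofι k hk)) →
    Nonempty (IsLimit (KernelFork.ofι (T.map k)
      (show T.map k ≫ T.map f = 0 by rw [← T.map_comp, hk, map_zero])))

end Axioms

/-- A closed Galois structure `Γ = (𝒞, 𝒳, I, H, η, ε, ℰ, ℱ)`: the replete full reflective
subcategory `𝒳` of `𝒞` is given by the predicate `inX`, the reflector `I` (composed with
the inclusion `H`) with unit `η` and the reflection universal property; the classes of
extensions `ℰ` (in `𝒞`) and `ℱ` (in `𝒳`) satisfy (E1)–(E3), `I(ℰ) ⊆ ℱ`, `H(ℱ) ⊆ ℰ`,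
unit components lie in `ℰ`, and the counit is an isomorphism. -/
structure GaloisStructure (𝒞 : Type u) [Category.{v} 𝒞] where
  inX : 𝒞 → Prop
  inX_iso : ∀ {X Y : 𝒞}, (X ≅ Y) → inX X → inX Y
  I : 𝒞 ⥤ 𝒞
  η : 𝟭 𝒞 ⟶ I
  I_mem : ∀ C : 𝒞, inX (I.obj C)
  refl_univ : ∀ {C D : 𝒞}, inX D → ∀ f : C ⟶ D, ∃! g : I.obj C ⟶ D, η.app C ≫ g = f
  η_iso_of_mem : ∀ {C : 𝒞}, inX C → IsIso (η.app C)
  E : MorphismProperty 𝒞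
  F : MorphismProperty 𝒞
  F_sub_E : ∀ {X Y : 𝒞} (f : X ⟶ Y), F f → E f
  F_in_X : ∀ {X Y : 𝒞} (f : X ⟶ Y), F f → inX X ∧ inX Y
  E1 : AxE1 E
  E2 : AxE2 E
  E3 : AxE3 E
  F1 : ∀ {X Y : 𝒞} (f : X ⟶ Y), inX X → inX Y → IsIso f → F f
  F2 : ∀ {X Y Z : 𝒞} (f : X ⟶ Z) (g : Y ⟶ Z), inX X → F g →
    ∃ (P : 𝒞) (p₁ : P ⟶ X) (p₂ : P ⟶ Y), IsPullback p₁ p₂ f g ∧ F p₁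
  F3 : ∀ {X Y Z : 𝒞} (f : X ⟶ Y) (g : Y ⟶ Z), F f → F g → F (f ≫ g)
  I_map_mem : ∀ {X Y : 𝒞} (f : X ⟶ Y), E f → F (I.map f)
  η_mem : ∀ C : 𝒞, E (η.app C)

namespace GaloisStructure

variable {𝒞 : Type u} [Category.{v} 𝒞] (G : GaloisStructure 𝒞)

/-- An extension is `Γ`-trivial when the naturality square of the unit at it is a
pullback. -/
def Trivial {A B : 𝒞} (f : A ⟶ B) : Prop :=
  IsPullback (G.η.app A) f (G.I.map f) (G.η.app B)

/-- An extension is `Γ`-normal when it lies in `ℰ` and the first projection of its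
kernel pair is `Γ`-trivial (in the presence of axiom (M) every morphism of `ℰ` is
monadic, so this agrees with the usual definition of normal extension). -/
def Normal {A B : 𝒞} (f : A ⟶ B) : Prop :=
  G.E f ∧ ∀ {P : 𝒞} (p₁ p₂ : P ⟶ A), IsPullback p₁ p₂ f f → G.Trivial p₁

end GaloisStructure

/-- Protoadditivity of a functor restricted to the full subcategory determined by a
predicate: split short exact sequences whose objects satisfy the predicate are sent to
split short exact sequences. -/
structure ProtoadditiveOn {𝒞 : Type u} [Category.{v} 𝒞] [HasZeroMorphisms 𝒞]
    (P : 𝒞 → Prop) (T : 𝒞 ⥤ 𝒞) : Prop where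
  map_zero : ∀ (X Y : 𝒞), P X → P Y → T.map (0 : X ⟶ Y) = 0
  preserves : ∀ {K A B : 𝒞} (k : K ⟶ A) (f : A ⟶ B) (s : B ⟶ A),
    P K → P A → P B → s ≫ f = 𝟙 B → ∀ (hk : k ≫ f = 0),
    Nonempty (IsLimit (KernelFork.ofι k hk)) →
    ∃ h0 : T.map k ≫ T.map f = 0,
      Nonempty (IsLimit (KernelFork.ofι (T.map k) h0))

/-- The data of a second closed Galois structure `Γ' = (F, U, θ, ζ) : (𝒳, ℱ) → (𝒴, 𝒢)`
on the reflective subcategory `𝒳` of a Galois structure `Γ` on `𝒞`: the replete full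
reflective subcategory `𝒴 ⊆ 𝒳` is given by `inY`, the reflector `F` (written `Fr`, with
unit `θ`) reflects `𝒳` onto `𝒴`, and the class `𝒢` of extensions of `𝒴` interacts with
`ℱ` as required for a closed Galois structure.  Composing with `Γ` yields the composite
Galois structure `Γ'' : (𝒞, ℰ) → (𝒴, 𝒢)` with reflector `F ∘ I` and unit
`θ_{I(−)} ∘ η`. -/
structure SecondStructure {𝒞 : Type u} [Category.{v} 𝒞] (G : GaloisStructure 𝒞) where
  inY : 𝒞 → Prop
  inY_iso : ∀ {X Y : 𝒞}, (X ≅ Y) → inY X → inY Y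
  Y_sub_X : ∀ C : 𝒞, inY C → G.inX C
  Fr : 𝒞 ⥤ 𝒞
  θ : 𝟭 𝒞 ⟶ Fr
  Fr_mem : ∀ C : 𝒞, G.inX C → inY (Fr.obj C)
  refl_univ : ∀ {C D : 𝒞}, G.inX C → inY D → ∀ f : C ⟶ D,
    ∃! g : Fr.obj C ⟶ D, θ.app C ≫ g = f
  θ_iso_of_mem : ∀ {C : 𝒞}, inY C → IsIso (θ.app C)
  𝒢 : MorphismProperty 𝒞
  𝒢_sub_F : ∀ {X Y : 𝒞} (f : X ⟶ Y), 𝒢 f → G.F f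
  𝒢_in_Y : ∀ {X Y : 𝒞} (f : X ⟶ Y), 𝒢 f → inY X ∧ inY Y
  θ_mem : ∀ C : 𝒞, G.inX C → G.F (θ.app C)
  Fr_map_mem : ∀ {X Y : 𝒞} (f : X ⟶ Y), G.F f → 𝒢 (Fr.map f)
  G1 : ∀ {X Y : 𝒞} (f : X ⟶ Y), inY X → inY Y → IsIso f → 𝒢 f
  G3 : ∀ {X Y Z : 𝒞} (f : X ⟶ Y) (g : Y ⟶ Z), 𝒢 f → 𝒢 g → 𝒢 (f ≫ g)

namespace SecondStructure

variable {𝒞 : Type u} [Category.{v} 𝒞] {G : GaloisStructure 𝒞} (S : SecondStructure G)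

/-- The unit `θ_{I(−)} ∘ η` of the composite reflection `F ∘ I` of `𝒞` onto `𝒴`. -/
def unit (C : 𝒞) : C ⟶ S.Fr.obj (G.I.obj C) := G.η.app C ≫ S.θ.app (G.I.obj C)

/-- `Γ''`-triviality: the naturality square of the unit of the composite reflection is
a pullback. -/
def TrivialComp {A B : 𝒞} (f : A ⟶ B) : Prop :=
  IsPullback (S.unit A) f ((G.I ⋙ S.Fr).map f) (S.unit B)

/-- `Γ''`-normality: the extension lies in `ℰ` and the first projection of its kernel
pair is `Γ''`-trivial. -/
def NormalComp {A B : 𝒞} (f : A ⟶ B) : Prop :=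
  G.E f ∧ ∀ {P : 𝒞} (p₁ p₂ : P ⟶ A), IsPullback p₁ p₂ f f → S.TrivialComp p₁

end SecondStructure


section MainAux
open CategoryTheory Limits

variable {𝒞 : Type u} [Category.{v} 𝒞]

/-- If a commutative square is a pullback, the induced comparison between the kernel of
the left vertical and the kernel of the right vertical is an isomorphism. -/
lemma kernel_comparison_of_isPullback [HasZeroMorphisms 𝒞] [HasKernels 𝒞]
    {X X' Y Y' : 𝒞} {t : X ⟶ X'} {p : X ⟶ Y} {q : X' ⟶ Y'} {h : Y ⟶ Y'}
    (hpb : IsPullback t p q h) :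
    ∃ e : kernel p ⟶ kernel q, IsIso e ∧ e ≫ kernel.ι q = kernel.ι p ≫ t := by
  have h0 : (kernel.ι p ≫ t) ≫ q = 0 := by
    rw [Category.assoc, hpb.w, ← Category.assoc, kernel.condition, zero_comp]
  refine ⟨kernel.lift q (kernel.ι p ≫ t) h0, ?_, kernel.lift_ι _ _ _⟩
  have hl0 : kernel.ι q ≫ q = (0 : kernel q ⟶ Y) ≫ h := by simp
  have hlt : hpb.lift (kernel.ι q) 0 hl0 ≫ t = kernel.ι q := hpb.lift_fst _ _ _
  have hlp : hpb.lift (kernel.ι q) 0 hl0 ≫ p = 0 := hpb.lift_snd _ _ _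
  have hel : kernel.lift q (kernel.ι p ≫ t) h0 ≫ hpb.lift (kernel.ι q) 0 hl0 = kernel.ι p := by
    apply hpb.hom_ext
    · rw [Category.assoc, hlt, kernel.lift_ι]
    · rw [Category.assoc, hlp, comp_zero, kernel.condition]
  refine ⟨kernel.lift p (hpb.lift (kernel.ι q) 0 hl0) hlp, ?_, ?_⟩
  · rw [← cancel_mono (kernel.ι p), Category.assoc, kernel.lift_ι, hel, Category.id_comp]
  · rw [← cancel_mono (kernel.ι q), Category.assoc, kernel.lift_ι, ← Category.assoc,
      kernel.lift_ι, hlt, Category.id_comp]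

/-- A reflection-unit component at the kernel of a morphism between objects of the
(replete, full, reflective) subcategory is an isomorphism. -/
lemma isIso_unit_kernel [HasZeroMorphisms 𝒞] [HasKernels 𝒞]
    {X Y TL : 𝒞} (g : X ⟶ Y) (u : kernel g ⟶ TL)
    (univX : ∃! h : TL ⟶ X, u ≫ h = kernel.ι g)
    (uniqY : ∀ h₁ h₂ : TL ⟶ Y, u ≫ h₁ = u ≫ h₂ → h₁ = h₂)
    (uniqT : ∀ h₁ h₂ : TL ⟶ TL, u ≫ h₁ = u ≫ h₂ → h₁ = h₂) : IsIso u := by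
  obtain ⟨kb, hkb, -⟩ := univX
  have hkb0 : kb ≫ g = 0 := by
    apply uniqY
    rw [← Category.assoc, hkb, kernel.condition, comp_zero]
  have h1 : u ≫ kernel.lift g kb hkb0 = 𝟙 _ := by
    rw [← cancel_mono (kernel.ι g), Category.assoc, kernel.lift_ι, hkb, Category.id_comp]
  refine ⟨kernel.lift g kb hkb0, h1, ?_⟩
  apply uniqT
  rw [← Category.assoc, h1, Category.id_comp, Category.comp_id]

end MainAux

/-- for a composite `Γ''` of closed Galois structures
`Γ : (𝒞, ℰ) → (𝒳, ℱ)` and `Γ' = (F, U, θ, ζ) : (𝒳, ℱ) → (𝒴, 𝒢)` with `𝒞` pointed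
protomodular, `(𝒞, ℰ)` satisfying (E4), (E5), (M), `I` preserving pullbacks of type (1)
and `F` protoadditive, an extension `f : A ⟶ B` of `ℰ` is `Γ''`-normal if and only if it
is `Γ`-normal and its kernel lies in `𝒴`. -/
theorem normalComp_iff_normal_and_kernel_inY
    {𝒞 : Type u} [Category.{v} 𝒞] [HasZeroMorphisms 𝒞] [HasZeroObject 𝒞]
    [HasFiniteLimits 𝒞]
    (G : GaloisStructure 𝒞) (S : SecondStructure G)
    (hpm : ProtomodularCat 𝒞)
    (h4 : AxE4 G.E) (h5 : AxE5 G.E) (hM : AxM G.E)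
    (htype1 : PreservesType1 G.E G.I)
    (hproto : ProtoadditiveOn G.inX S.Fr)
    {A B : 𝒞} (f : A ⟶ B) (hf : G.E f) :
    S.NormalComp f ↔ (G.Normal f ∧ S.inY (kernel f)) := by
  -- uniqueness helpers coming from the universal property of the reflections
  have uniqη : ∀ {C D : 𝒞}, G.inX D → ∀ h₁ h₂ : G.I.obj C ⟶ D,
      G.η.app C ≫ h₁ = G.η.app C ≫ h₂ → h₁ = h₂ := by
    intro C D hD h₁ h₂ hh
    obtain ⟨g0, -, hu⟩ := G.refl_univ hD (G.η.app C ≫ h₁)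
    rw [hu h₁ rfl, hu h₂ hh.symm]
  have uniqθ : ∀ {C D : 𝒞}, G.inX C → S.inY D → ∀ h₁ h₂ : S.Fr.obj C ⟶ D,
      S.θ.app C ≫ h₁ = S.θ.app C ≫ h₂ → h₁ = h₂ := by
    intro C D hC hD h₁ h₂ hh
    obtain ⟨g0, -, hu⟩ := S.refl_univ hC hD (S.θ.app C ≫ h₁)
    rw [hu h₁ rfl, hu h₂ hh.symm]
  -- 𝒳 is closed under kernels of morphisms between 𝒳-objects
  have inX_ker : ∀ {X Y : 𝒞} (g : X ⟶ Y), G.inX X → G.inX Y → G.inX (kernel g) := by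
    intro X Y g hX hY
    have : IsIso (G.η.app (kernel g)) :=
      isIso_unit_kernel g (G.η.app (kernel g)) (G.refl_univ hX (kernel.ι g))
        (uniqη hY) (uniqη (G.I_mem _))
    exact G.inX_iso (asIso (G.η.app (kernel g))).symm (G.I_mem _)
  -- 𝒴 is closed under kernels of morphisms between 𝒴-objects
  have inY_ker : ∀ {X Y : 𝒞} (g : X ⟶ Y), S.inY X → S.inY Y → S.inY (kernel g) := by
    intro X Y g hX hY
    have hXk : G.inX (kernel g) := inX_ker g (S.Y_sub_X _ hX) (S.Y_sub_X _ hY)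
    have : IsIso (S.θ.app (kernel g)) :=
      isIso_unit_kernel g (S.θ.app (kernel g)) (S.refl_univ hXk hX (kernel.ι g))
        (uniqθ hXk hY) (uniqθ hXk (S.Fr_mem _ hXk))
    exact S.inY_iso (asIso (S.θ.app (kernel g))).symm (S.Fr_mem _ hXk)
  -- the first projection of a kernel pair of f lies in ℰ
  have Ep₁ : ∀ {P : 𝒞} (p₁ p₂ : P ⟶ A), IsPullback p₁ p₂ f f → G.E p₁ := by
    intro P p₁ p₂ hPB
    obtain ⟨P', q₁, q₂, hpb', hq₁⟩ := G.E2 f f hf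
    have hfst : G.E (pullback.fst f f) := by
      have : pullback.fst f f = hpb'.isoPullback.inv ≫ q₁ := by
        rw [eq_comm, Iso.inv_comp_eq, hpb'.isoPullback_hom_fst]
      rw [this]
      exact G.E3 _ _ (G.E1 _ inferInstance) hq₁
    have : p₁ = hPB.isoPullback.hom ≫ pullback.fst f f := (hPB.isoPullback_hom_fst).symm
    rw [this]
    exact G.E3 _ _ (G.E1 _ inferInstance) hfst
  constructor
  · rintro ⟨hfE, hT⟩
    have triv : ∀ {P : 𝒞} (p₁ p₂ : P ⟶ A), IsPullback p₁ p₂ f f → G.Trivial p₁ := by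
      intro P p₁ p₂ hPB
      have hQ : IsPullback (S.unit P) p₁ (S.Fr.map (G.I.map p₁)) (S.unit A) := hT p₁ p₂ hPB
      have hEp₁ := Ep₁ p₁ p₂ hPB
      have hΔ : (hPB.lift (𝟙 A) (𝟙 A) rfl) ≫ p₁ = 𝟙 A := hPB.lift_fst _ _ _
      have hEFIp₁ : G.E (S.Fr.map (G.I.map p₁)) :=
        G.F_sub_E _ (S.𝒢_sub_F _ (S.Fr_map_mem _ (G.I_map_mem _ hEp₁)))
      have hEunitA : G.E (S.unit A) :=
        G.E3 _ _ (G.η_mem A) (G.F_sub_E _ (S.θ_mem _ (G.I_mem A)))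
      have hsplit : (S.Fr.map (G.I.map (hPB.lift (𝟙 A) (𝟙 A) rfl))) ≫
          S.Fr.map (G.I.map p₁) = 𝟙 _ := by
        rw [← S.Fr.map_comp, ← G.I.map_comp, hΔ, G.I.map_id, S.Fr.map_id]
      have hβ := htype1 _ _ _ _ _ hsplit hEFIp₁ hEunitA hQ
      have i1 : IsIso (G.η.app (S.Fr.obj (G.I.obj P))) :=
        G.η_iso_of_mem (S.Y_sub_X _ (S.Fr_mem _ (G.I_mem P)))
      have i2 : IsIso (G.η.app (S.Fr.obj (G.I.obj A))) :=
        G.η_iso_of_mem (S.Y_sub_X _ (S.Fr_mem _ (G.I_mem A)))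
      have hγ : IsPullback (G.η.app (S.Fr.obj (G.I.obj P))) (S.Fr.map (G.I.map p₁))
          (G.I.map (S.Fr.map (G.I.map p₁))) (G.η.app (S.Fr.obj (G.I.obj A))) :=
        IsPullback.of_horiz_isIso ⟨by simpa using (G.η.naturality (S.Fr.map (G.I.map p₁))).symm⟩
      have outer := hQ.paste_horiz hγ
      have htop : S.unit P ≫ G.η.app (S.Fr.obj (G.I.obj P)) =
          G.η.app P ≫ G.I.map (S.unit P) := by
        simpa using G.η.naturality (S.unit P)
      have hbot : S.unit A ≫ G.η.app (S.Fr.obj (G.I.obj A)) =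
          G.η.app A ≫ G.I.map (S.unit A) := by
        simpa using G.η.naturality (S.unit A)
      rw [htop, hbot] at outer
      exact IsPullback.of_right outer (by simpa using (G.η.naturality p₁).symm) hβ
    refine ⟨⟨hfE, fun p₁ p₂ hPB => triv p₁ p₂ hPB⟩, ?_⟩
    have hPB : IsPullback (pullback.fst f f) (pullback.snd f f) f f := IsPullback.of_hasPullback f f
    obtain ⟨e₁, he₁, -⟩ := kernel_comparison_of_isPullback hPB.flip
    have hQ : IsPullback (S.unit (pullback f f)) (pullback.fst f f)
        (S.Fr.map (G.I.map (pullback.fst f f))) (S.unit A) := hT _ _ hPB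
    obtain ⟨e₃, he₃, -⟩ := kernel_comparison_of_isPullback hQ
    have hYker : S.inY (kernel (S.Fr.map (G.I.map (pullback.fst f f)))) :=
      inY_ker _ (S.Fr_mem _ (G.I_mem _)) (S.Fr_mem _ (G.I_mem _))
    haveI := he₁; haveI := he₃
    exact S.inY_iso ((asIso e₃).symm ≪≫ asIso e₁) hYker
  · rintro ⟨⟨hfE, hTriv⟩, hK⟩
    refine ⟨hfE, ?_⟩
    intro P p₁ p₂ hPB
    have hα : IsPullback (G.η.app P) p₁ (G.I.map p₁) (G.η.app A) := hTriv p₁ p₂ hPB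
    have hΔ : (hPB.lift (𝟙 A) (𝟙 A) rfl) ≫ p₁ = 𝟙 A := hPB.lift_fst _ _ _
    obtain ⟨e₁, he₁, -⟩ := kernel_comparison_of_isPullback hPB.flip
    obtain ⟨e₂, he₂, -⟩ := kernel_comparison_of_isPullback hα
    haveI := he₁; haveI := he₂
    have hYK : S.inY (kernel (G.I.map p₁)) :=
      S.inY_iso ((asIso e₁).symm ≪≫ asIso e₂) hK
    have hXK : G.inX (kernel (G.I.map p₁)) := S.Y_sub_X _ hYK
    haveI hθiso : IsIso (S.θ.app (kernel (G.I.map p₁))) := S.θ_iso_of_mem hYK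
    have hsplit : G.I.map (hPB.lift (𝟙 A) (𝟙 A) rfl) ≫ G.I.map p₁ = 𝟙 _ := by
      rw [← G.I.map_comp, hΔ, G.I.map_id]
    obtain ⟨h0, ⟨hlim⟩⟩ := hproto.preserves (kernel.ι (G.I.map p₁)) (G.I.map p₁)
      (G.I.map (hPB.lift (𝟙 A) (𝟙 A) rfl)) hXK (G.I_mem P) (G.I_mem A) hsplit
      (kernel.condition _) ⟨kernelIsKernel _⟩
    have hnat : S.θ.app (G.I.obj P) ≫ S.Fr.map (G.I.map p₁) =
        G.I.map p₁ ≫ S.θ.app (G.I.obj A) := by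
      simpa using (S.θ.naturality (G.I.map p₁)).symm
    -- the comparison iso φ from protoadditivity
    obtain ⟨hφ, hφι⟩ : ∃ e : S.Fr.obj (kernel (G.I.map p₁)) ≅ kernel (S.Fr.map (G.I.map p₁)),
        e.hom ≫ kernel.ι (S.Fr.map (G.I.map p₁)) = S.Fr.map (kernel.ι (G.I.map p₁)) :=
      ⟨hlim.conePointUniqueUpToIso (limit.isLimit (parallelPair (S.Fr.map (G.I.map p₁)) 0)),
        (by simpa using hlim.conePointUniqueUpToIso_hom_comp (limit.isLimit (parallelPair (S.Fr.map (G.I.map p₁)) 0)) WalkingParallelPair.zero)⟩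
    -- the induced morphism on kernels
    have hθb0 : (kernel.ι (G.I.map p₁) ≫ S.θ.app (G.I.obj P)) ≫ S.Fr.map (G.I.map p₁) = 0 := by
      rw [Category.assoc, hnat, ← Category.assoc, kernel.condition, zero_comp]
    have hθbι : kernel.lift _ _ hθb0 ≫ kernel.ι (S.Fr.map (G.I.map p₁)) =
        kernel.ι (G.I.map p₁) ≫ S.θ.app (G.I.obj P) := kernel.lift_ι _ _ _
    have hθbeq : kernel.lift _ _ hθb0 = S.θ.app (kernel (G.I.map p₁)) ≫ hφ.hom := by
      rw [← cancel_mono (kernel.ι (S.Fr.map (G.I.map p₁))), hθbι, Category.assoc, hφι]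
      simpa using S.θ.naturality (kernel.ι (G.I.map p₁))
    haveI hθbiso : IsIso (kernel.lift _ _ hθb0) := by rw [hθbeq]; infer_instance
    -- the comparison with the pullback of Fr(I p₁) along θ
    have hcw : S.θ.app (G.I.obj P) ≫ S.Fr.map (G.I.map p₁) =
        G.I.map p₁ ≫ S.θ.app (G.I.obj A) := hnat
    have hσw : (S.θ.app (G.I.obj A) ≫ S.Fr.map (G.I.map (hPB.lift (𝟙 A) (𝟙 A) rfl))) ≫
        S.Fr.map (G.I.map p₁) = 𝟙 _ ≫ S.θ.app (G.I.obj A) := by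
      rw [Category.assoc, ← S.Fr.map_comp, ← G.I.map_comp, hΔ, G.I.map_id, S.Fr.map_id,
        Category.comp_id, Category.id_comp]
    have hu0 : (kernel.ι (G.I.map p₁) ≫ pullback.lift _ _ hcw) ≫
        pullback.snd (S.Fr.map (G.I.map p₁)) (S.θ.app (G.I.obj A)) = 0 := by
      rw [Category.assoc, pullback.lift_snd, kernel.condition]
    obtain ⟨e₄, he₄, he₄ι⟩ := kernel_comparison_of_isPullback
      (IsPullback.of_hasPullback (S.Fr.map (G.I.map p₁)) (S.θ.app (G.I.obj A)))
    haveI := he₄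
    have hue : kernel.lift _ _ hu0 ≫ e₄ = kernel.lift _ _ hθb0 := by
      rw [← cancel_mono (kernel.ι (S.Fr.map (G.I.map p₁))), Category.assoc, he₄ι,
        ← Category.assoc, kernel.lift_ι, Category.assoc, pullback.lift_fst, hθbι]
    haveI huiso : IsIso (kernel.lift _ _ hu0) := by
      have : kernel.lift _ _ hu0 = kernel.lift _ _ hθb0 ≫ inv e₄ := by
        rw [← hue, Category.assoc, IsIso.hom_inv_id, Category.comp_id]
      rw [this]; infer_instance
    have hciso : IsIso (pullback.lift _ _ hcw) :=
      hpm.2 (kernel.ι (G.I.map p₁)) (G.I.map p₁) (G.I.map (hPB.lift (𝟙 A) (𝟙 A) rfl))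
        (kernel.ι (pullback.snd (S.Fr.map (G.I.map p₁)) (S.θ.app (G.I.obj A))))
        (pullback.snd (S.Fr.map (G.I.map p₁)) (S.θ.app (G.I.obj A)))
        (pullback.lift _ _ hσw)
        (kernel.lift _ _ hu0) (pullback.lift _ _ hcw) (𝟙 (G.I.obj A))
        hsplit (pullback.lift_snd _ _ _)
        (kernel.condition _) (kernel.condition _)
        ⟨kernelIsKernel _⟩ ⟨kernelIsKernel _⟩
        (kernel.lift_ι _ _ _)
        (by rw [pullback.lift_snd, Category.comp_id])
        huiso inferInstance
    haveI := hciso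
    have hδ : IsPullback (S.θ.app (G.I.obj P)) (G.I.map p₁) (S.Fr.map (G.I.map p₁))
        (S.θ.app (G.I.obj A)) :=
      IsPullback.of_iso_pullback ⟨hnat⟩ (asIso (pullback.lift _ _ hcw))
        (pullback.lift_fst _ _ _) (pullback.lift_snd _ _ _)
    have := hα.paste_horiz hδ
    simpa [SecondStructure.TrivialComp, SecondStructure.unit, Functor.comp_map] using this
end

section
/- Let (𝒞, 𝒫) be a pair satisfying axioms (E1)–(E3) with enough 𝒫-projective objects, and let Cod : Ext_𝒫(𝒞) → 𝒞 be the codomain functor. For an object C of 𝒞, consider the comma category C ↓ Cod. Then the full subcategory 𝒫_C of C ↓ Cod whose objects are the pairs (1_C : C → Cod(p), p) with p a 1-fold 𝒫-projective presentation of C is an initial subcategory; in fact, for every object Q = (h : C → Cod(q), q) of C ↓ Cod there exists a weak terminal object in the comma category 𝒫_C ↓ Q. -/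
open CategoryTheory Limits

universe v u

section Axioms
variable {𝒟 : Type u} [Category.{v} 𝒟]

@[simp] lemma ExtHom.comp_top {E : MorphismProperty 𝒟} {a b c : ExtObj E}
    (φ : a ⟶ b) (ψ : b ⟶ c) : (φ ≫ ψ).top = φ.top ≫ ψ.top := rfl

@[simp] lemma ExtHom.comp_bot {E : MorphismProperty 𝒟} {a b c : ExtObj E}
    (φ : a ⟶ b) (ψ : b ⟶ c) : (φ ≫ ψ).bot = φ.bot ≫ ψ.bot := rfl

@[simp] lemma ExtHom.id_top {E : MorphismProperty 𝒟} (a : ExtObj E) :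
    (𝟙 a : a ⟶ a).top = 𝟙 a.dom := rfl

@[simp] lemma ExtHom.id_bot {E : MorphismProperty 𝒟} (a : ExtObj E) :
    (𝟙 a : a ⟶ a).bot = 𝟙 a.cod := rfl

end Axioms

variable {𝒞 : Type u} [Category.{v} 𝒞]

/-- The codomain functor `Ext_𝒫(𝒞) ⥤ 𝒞`. -/
def CodF (P : MorphismProperty 𝒞) : ExtObj P ⥤ 𝒞 where
  obj a := a.cod
  map φ := φ.bot
  map_id _ := rfl
  map_comp _ _ := rfl

/-- An object is `𝒫`-projective if every morphism from it to the codomain of a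
`𝒫`-morphism lifts along it. -/
def PProj (P : MorphismProperty 𝒞) (Q : 𝒞) : Prop :=
  ∀ {X B : 𝒞} (f : X ⟶ B), P f → ∀ g : Q ⟶ B, ∃ h : Q ⟶ X, h ≫ f = g

/-- `𝒞` has enough `𝒫`-projective objects. -/
def EnoughPProjectives (P : MorphismProperty 𝒞) : Prop :=
  ∀ C : 𝒞, ∃ (Q : 𝒞) (p : Q ⟶ C), P p ∧ PProj P Q

/-- The objects of the comma category `C ↓ Cod` of the form `(1_C : C ⟶ Cod(p), p)`
with `p` a 1-fold `𝒫`-projective presentation of `C`. -/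
def IsPresObj (P : MorphismProperty 𝒞) (C : 𝒞) (X : StructuredArrow C (CodF P)) : Prop :=
  PProj P X.right.dom ∧ ∃ e : X.right.cod = C, X.hom = eqToHom e.symm

/-- for `(𝒞, 𝒫)` satisfying (E1)–(E3) with enough `𝒫`-projective objects,
the full subcategory `𝒫_C` of the comma category `C ↓ Cod` on the `𝒫`-projective
presentations of `C` (with identity structure morphism) is an initial subcategory;
in fact, for every object `Q` of `C ↓ Cod` there is a weak terminal object in the comma
category `𝒫_C ↓ Q`. -/
theorem presentations_initial (P : MorphismProperty 𝒞)
    (h1 : AxE1 P) (h2 : AxE2 P) (h3 : AxE3 P)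
    (hproj : EnoughPProjectives P) (C : 𝒞) :
    (ObjectProperty.ι (IsPresObj P C)).Initial ∧
    (∀ Q : StructuredArrow C (CodF P),
      ∃ T : CostructuredArrow (ObjectProperty.ι (IsPresObj P C)) Q,
        ∀ Z : CostructuredArrow (ObjectProperty.ι (IsPresObj P C)) Q,
          Nonempty (Z ⟶ T)) := by
  
  -- Auxiliary: weak terminal object in each comma category
  have key : ∀ Q : StructuredArrow C (CodF P),
      ∃ T : CostructuredArrow (ObjectProperty.ι (IsPresObj P C)) Q,
        ∀ Z : CostructuredArrow (ObjectProperty.ι (IsPresObj P C)) Q,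
          Nonempty (Z ⟶ T) := by
    intro Q
    obtain ⟨PB, p₁, p₂, hpb, hp₁⟩ := h2 Q.hom Q.right.hom Q.right.mem
    obtain ⟨Pi, r, hr, hPi⟩ := hproj PB
    -- the presentation
    set Tpres : ExtObj P := ⟨Pi, C, r ≫ p₁, h3 _ _ hr hp₁⟩ with hTpres
    set Tobj : StructuredArrow C (CodF P) := StructuredArrow.mk (Y := Tpres) (𝟙 C)
    have hTobj : IsPresObj P C Tobj := ⟨hPi, rfl, by simp [Tobj]; rfl⟩
    set TF : ObjectProperty.FullSubcategory (IsPresObj P C) := ⟨Tobj, hTobj⟩ with hTF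
    have sq : (r ≫ p₂) ≫ Q.right.hom = Tpres.hom ≫ Q.hom := by
      exact (Category.assoc _ _ _).trans ((congrArg (r ≫ ·) hpb.w.symm).trans (Category.assoc _ _ _).symm)
    set g : Tpres ⟶ Q.right := ⟨r ≫ p₂, Q.hom, sq⟩ with hg
    have wT : Tobj.hom ≫ (CodF P).map g = Q.hom := by
      simp [Tobj, CodF, hg]
    set Tmap : (ObjectProperty.ι (IsPresObj P C)).obj TF ⟶ Q :=
      StructuredArrow.homMk g wT with hTmap
    refine ⟨CostructuredArrow.mk Tmap, fun Z => ?_⟩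
    obtain ⟨hX, e, hXhom⟩ := Z.left.property
    set X := Z.left.obj with hXdef
    set f : X.right ⟶ Q.right := Z.hom.right with hfdef
    have wZ : X.hom ≫ (CodF P).map f = Q.hom := StructuredArrow.w Z.hom
    have hbot : f.bot = eqToHom e ≫ Q.hom := by
      have : eqToHom e.symm ≫ f.bot = Q.hom := by
        rw [← hXhom]; exact wZ
      rw [← this]; erw [← Category.assoc, eqToHom_trans, eqToHom_refl, Category.id_comp]
    have hcomm : (X.right.hom ≫ eqToHom e) ≫ Q.hom = f.top ≫ Q.right.hom := by
      rw [Category.assoc, ← hbot, f.w]; rfl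
    set l : X.right.dom ⟶ PB := hpb.lift _ _ hcomm with hl
    have hl1 : l ≫ p₁ = X.right.hom ≫ eqToHom e := hpb.lift_fst _ _ _
    have hl2 : l ≫ p₂ = f.top := hpb.lift_snd _ _ _
    obtain ⟨t, ht⟩ := hX r hr l
    have sqα : t ≫ Tpres.hom = X.right.hom ≫ eqToHom e := by
      show t ≫ (r ≫ p₁) = _
      rw [← Category.assoc, ht, hl1]
    set gα : X.right ⟶ Tpres := ⟨t, eqToHom e, sqα⟩ with hgα
    have wα : X.hom ≫ (CodF P).map gα = Tobj.hom := by
      simp only [Tobj, CodF, hgα]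
      rw [show X.hom = eqToHom e.symm from hXhom, eqToHom_trans, eqToHom_refl]
      rfl
    set α : Z.left ⟶ TF := ObjectProperty.homMk (StructuredArrow.homMk gα wα) with hα
    refine ⟨CostructuredArrow.homMk α ?_⟩
    apply StructuredArrow.hom_ext
    apply ExtHom.ext
    · show (gα.top ≫ g.top) = f.top
      simp only [hgα, hg]
      rw [← Category.assoc, ht, hl2]
    · show (gα.bot ≫ g.bot) = f.bot
      simp only [hgα, hg]
      rw [hbot]; rfl
  refine ⟨⟨fun Q => ?_⟩, key⟩
  obtain ⟨T, hT⟩ := key Q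
  have : Nonempty (CostructuredArrow (ObjectProperty.ι (IsPresObj P C)) Q) := ⟨T⟩
  apply zigzag_isConnected
  intro j₁ j₂
  obtain ⟨f₁⟩ := hT j₁
  obtain ⟨f₂⟩ := hT j₂
  exact Relation.ReflTransGen.tail (Relation.ReflTransGen.single (Or.inl ⟨f₁⟩)) (Or.inr ⟨f₂⟩)
end
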